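/- There exists a path ω* from E to O in the independent-set flip graph of the L×L toric grid (L ≥ 4 even) such that max_{J∈ω*} Δ(J) = L + 1: gradually build a single column-cluster of odd vertices until it contains L/2 − 1 odd active nodes (Δ = L − 1), remove the two even neighbors of the missing odd vertex (Δ reaches L + 1), add the missing odd vertex to form a stripe, then expand the stripe column by column to reach O while keeping Δ ≤ L + 1. Hence φ(E,O) ≤ L + 1. -/

import Mathlib

open scoped Classical

/-- The toric grid: vertex set `(ZMod L) × (ZMod L)`, with an edge between two
vertices iff they differ by `±1 (mod L)` in exactly one coordinate. -/
def torus (L : ℕ) : SimpleGraph (ZMod L × ZMod L) :=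
  SimpleGraph.fromRel (fun u v =>
    (u.1 = v.1 ∧ u.2 = v.2 + 1) ∨ (u.2 = v.2 ∧ u.1 = v.1 + 1))

/-- A vertex of the toric grid is even if its coordinate sum is even. -/
def isEvenVertex {L : ℕ} [NeZero L] (v : ZMod L × ZMod L) : Prop :=
  Even (v.1.val + v.2.val)

/-- The even maximum independent set `E`. -/
noncomputable def evenClass (L : ℕ) [NeZero L] : Finset (ZMod L × ZMod L) :=
  Finset.univ.filter (fun v => isEvenVertex v)

/-- `I` is an independent set of the toric grid. -/
def Indep (L : ℕ) (I : Finset (ZMod L × ZMod L)) : Prop :=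
  ∀ u ∈ I, ∀ v ∈ I, ¬ (torus L).Adj u v

/-- The efficiency gap `Δ(I) = L²/2 − |I|`. -/
def gap (L : ℕ) (I : Finset (ZMod L × ZMod L)) : ℕ := L ^ 2 / 2 - I.card

/-- `ω` is a path of independent sets from `I` to `I'` in which consecutive
configurations differ by a single flip (adding or removing one vertex). -/
def IsFlipPath (L : ℕ) (ω : List (Finset (ZMod L × ZMod L)))
    (I I' : Finset (ZMod L × ZMod L)) : Prop :=
  ω ≠ [] ∧ ω.head? = some I ∧ ω.getLast? = some I' ∧
  (∀ J ∈ ω, Indep L J) ∧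
  ω.Chain' (fun J K => (symmDiff J K).card = 1)

/-- The communication height `φ(I,I') = min over paths `ω : I → I'` of
`max_{J ∈ ω} Δ(J)`. -/
noncomputable def commHeight (L : ℕ) (I I' : Finset (ZMod L × ZMod L)) : ℕ :=
  sInf {b : ℕ | ∃ ω, IsFlipPath L ω I I' ∧ ∀ J ∈ ω, gap L J ≤ b}

/-- The odd maximum independent set `O`. -/
noncomputable def oddClass (L : ℕ) [NeZero L] : Finset (ZMod L × ZMod L) :=
  Finset.univ.filter (fun v => ¬ isEvenVertex v)

/-!
Starting from `E`, the even sites of columns `0` and `1` are removed one at a time, so the gap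
climbs to `L`. Then columns `1, …, L-2` are filled with odd sites, row by row: the odd site
`(k, y)` becomes free once the even site `(k+1, y)` is removed, so the gap alternates between
`L + 1` and `L`. Now only columns `L-1` and `0` lack odd sites; adding them lowers the gap to `0`
and ends at `O`.
-/

open Finset Relation

section FlipPaths

variable {L B : ℕ} {I J K X : Finset (ZMod L × ZMod L)} {ω : List (Finset (ZMod L × ZMod L))}

theorem isFlipPath_singleton (hI : Indep L I) : IsFlipPath L [I] I I :=
  ⟨List.cons_ne_nil _ _, rfl, rfl, by simpa using hI, List.isChain_singleton _⟩

theorem IsFlipPath.cons (hI : Indep L I) (hIK : #(symmDiff I K) = 1) (h : IsFlipPath L ω K J) :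
    IsFlipPath L (I :: ω) I J := by
  obtain ⟨hne, hhead, hlast, hind, hchain⟩ := h
  obtain ⟨K', ω', rfl⟩ := List.exists_cons_of_ne_nil hne
  obtain rfl : K' = K := by simpa using hhead
  exact ⟨List.cons_ne_nil _ _, rfl, by simpa [List.getLast?_cons_cons] using hlast,
    List.forall_mem_cons.2 ⟨hI, hind⟩, List.isChain_cons_cons.2 ⟨hIK, hchain⟩⟩

/-- Only the target of the flip is constrained: the source is the target of the previous flip, or
the start of the path. -/
def FlipStep (L B : ℕ) (I J : Finset (ZMod L × ZMod L)) : Prop :=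
  #(symmDiff I J) = 1 ∧ Indep L J ∧ gap L J ≤ B

theorem exists_isFlipPath_of_reflTransGen (hI : Indep L I) (hgI : gap L I ≤ B)
    (h : ReflTransGen (FlipStep L B) I J) : ∃ ω, IsFlipPath L ω I J ∧ ∀ K ∈ ω, gap L K ≤ B := by
  induction h using ReflTransGen.head_induction_on with
  | refl => exact ⟨_, isFlipPath_singleton hI, by simpa using hgI⟩
  | head hIK _ ih =>
    obtain ⟨ω, hω, hgap⟩ := ih hIK.2.1 hIK.2.2
    exact ⟨_, hω.cons hI hIK.1, List.forall_mem_cons.2 ⟨hgI, hgap⟩⟩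

theorem exists_isFlipPath_through (hI : Indep L I) (hgI : gap L I ≤ B)
    (h₁ : ReflTransGen (FlipStep L B) I X) (h₂ : ReflTransGen (FlipStep L B) X J) :
    ∃ ω, IsFlipPath L ω I J ∧ (∀ K ∈ ω, gap L K ≤ B) ∧ X ∈ ω := by
  induction h₁ using ReflTransGen.head_induction_on with
  | refl =>
    obtain ⟨ω, hω, hgap⟩ := exists_isFlipPath_of_reflTransGen hI hgI h₂
    exact ⟨ω, hω, hgap, List.mem_of_mem_head? hω.2.1⟩
  | head hIK _ ih =>
    obtain ⟨ω, hω, hgap, hX⟩ := ih hIK.2.1 hIK.2.2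
    exact ⟨_, hω.cons hI hIK.1, List.forall_mem_cons.2 ⟨hgI, hgap⟩, List.mem_cons_of_mem _ hX⟩

end FlipPaths

theorem reflTransGen_of_forall_succ {β : Type*} {r : β → β → Prop} (f : ℕ → β) {m n : ℕ}
    (hmn : m ≤ n) (h : ∀ i, m ≤ i → i < n → ReflTransGen r (f i) (f (i + 1))) :
    ReflTransGen r (f m) (f n) := by
  induction n, hmn using Nat.le_induction with
  | base => exact .refl
  | succ n hmn ih => exact (ih fun i hi hin => h i hi (by omega)).trans (h n hmn (by omega))

theorem Finset.card_symmDiff_erase {α : Type*} [DecidableEq α] {s : Finset α} {a : α}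
    (ha : a ∈ s) : #(symmDiff s (s.erase a)) = 1 := by
  rw [symmDiff_of_ge (s.erase_subset a), sdiff_erase_self ha, card_singleton]

theorem Finset.card_symmDiff_insert {α : Type*} [DecidableEq α] {s : Finset α} {a : α}
    (ha : a ∉ s) : #(symmDiff s (insert a s)) = 1 := by
  rw [symmDiff_of_le (s.subset_insert a), insert_sdiff_cancel ha, card_singleton]

def CycAdj (L a b : ℕ) : Prop :=
  a + 1 = b ∨ b + 1 = a ∨ (a + 1 = L ∧ b = 0) ∨ (b + 1 = L ∧ a = 0)

theorem CycAdj.symm {L a b : ℕ} (h : CycAdj L a b) : CycAdj L b a := by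
  unfold CycAdj at *; omega

def GridAdj (L x y x' y' : ℕ) : Prop :=
  (x = x' ∧ CycAdj L y y') ∨ (y = y' ∧ CycAdj L x x')

section Coordinates

variable {L : ℕ} [NeZero L] {p q : ℕ → ℕ → Prop}

theorem ZMod.val_add_one_cases (a : ZMod L) :
    (a + 1).val = a.val + 1 ∨ ((a + 1).val = 0 ∧ a.val + 1 = L) := by
  rw [ZMod.val_add, ZMod.val_one_eq_one_mod, Nat.add_mod_mod]
  rcases (show a.val + 1 ≤ L from a.val_lt).lt_or_eq with h | h
  · exact .inl (Nat.mod_eq_of_lt h)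
  · exact .inr ⟨by rw [h, Nat.mod_self], h⟩

theorem cycAdj_val_add_one (a : ZMod L) : CycAdj L a.val (a + 1).val := by
  unfold CycAdj
  rcases ZMod.val_add_one_cases a with h | ⟨h, h'⟩ <;> omega

theorem gridAdj_of_torus_adj {u v : ZMod L × ZMod L} (h : (torus L).Adj u v) :
    GridAdj L u.1.val u.2.val v.1.val v.2.val := by
  rw [torus, SimpleGraph.fromRel_adj] at h
  obtain ⟨-, (⟨h1, h2⟩ | ⟨h1, h2⟩) | (⟨h1, h2⟩ | ⟨h1, h2⟩)⟩ := h
  · exact .inl ⟨congrArg _ h1, h2 ▸ (cycAdj_val_add_one _).symm⟩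
  · exact .inr ⟨congrArg _ h1, h2 ▸ (cycAdj_val_add_one _).symm⟩
  · exact .inl ⟨(congrArg _ h1).symm, h2 ▸ cycAdj_val_add_one _⟩
  · exact .inr ⟨(congrArg _ h1).symm, h2 ▸ cycAdj_val_add_one _⟩

/-- Configurations are described by predicates on the coordinates in `{0, …, L-1}`, so that
membership, independence and single-flip questions become linear arithmetic. -/
noncomputable def coordSet (L : ℕ) [NeZero L] (p : ℕ → ℕ → Prop) : Finset (ZMod L × ZMod L) :=
  {v | p v.1.val v.2.val}

@[simp] theorem mem_coordSet {v : ZMod L × ZMod L} : v ∈ coordSet L p ↔ p v.1.val v.2.val := by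
  simp [coordSet]

theorem coordSet_congr (h : ∀ x < L, ∀ y < L, p x y ↔ q x y) : coordSet L p = coordSet L q := by
  ext v
  simpa using h _ v.1.val_lt _ v.2.val_lt

theorem indep_coordSet
    (h : ∀ x < L, ∀ y < L, ∀ x' < L, ∀ y' < L, p x y → p x' y' → ¬GridAdj L x y x' y') :
    Indep L (coordSet L p) := fun u hu v hv huv =>
  h _ u.1.val_lt _ u.2.val_lt _ v.1.val_lt _ v.2.val_lt (mem_coordSet.1 hu) (mem_coordSet.1 hv)
    (gridAdj_of_torus_adj huv)

theorem eq_natCast_pair_iff {a b : ℕ} (ha : a < L) (hb : b < L) {v : ZMod L × ZMod L} :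
    v = ((a : ZMod L), (b : ZMod L)) ↔ v.1.val = a ∧ v.2.val = b := by
  refine ⟨by rintro rfl; exact ⟨ZMod.val_natCast_of_lt ha, ZMod.val_natCast_of_lt hb⟩, ?_⟩
  rintro ⟨rfl, rfl⟩
  simp

theorem exists_coordSet_eq_erase {a b : ℕ} (ha : a < L) (hb : b < L) (hab : p a b)
    (hq : ∀ x < L, ∀ y < L, q x y ↔ p x y ∧ ¬(x = a ∧ y = b)) :
    ∃ v ∈ coordSet L p, coordSet L q = (coordSet L p).erase v := by
  refine ⟨((a : ZMod L), (b : ZMod L)), ?_, ?_⟩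
  · simpa [ZMod.val_natCast_of_lt ha, ZMod.val_natCast_of_lt hb] using hab
  · ext v
    rw [mem_erase, ne_eq, eq_natCast_pair_iff ha hb, mem_coordSet, mem_coordSet,
      hq _ v.1.val_lt _ v.2.val_lt, and_comm]

theorem exists_coordSet_eq_insert {a b : ℕ} (ha : a < L) (hb : b < L) (hab : ¬p a b)
    (hq : ∀ x < L, ∀ y < L, q x y ↔ p x y ∨ (x = a ∧ y = b)) :
    ∃ v ∉ coordSet L p, coordSet L q = insert v (coordSet L p) := by
  refine ⟨((a : ZMod L), (b : ZMod L)), ?_, ?_⟩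
  · simpa [ZMod.val_natCast_of_lt ha, ZMod.val_natCast_of_lt hb] using hab
  · ext v
    rw [mem_insert, eq_natCast_pair_iff ha hb, mem_coordSet, mem_coordSet,
      hq _ v.1.val_lt _ v.2.val_lt, or_comm]

theorem isEvenVertex_add_snd_one (hL : Even L) (v : ZMod L × ZMod L) :
    isEvenVertex (v.1, v.2 + 1) ↔ ¬isEvenVertex v := by
  have := Nat.even_iff.1 hL
  simp only [isEvenVertex, Nat.even_iff]
  rcases ZMod.val_add_one_cases v.2 with h | ⟨h, h'⟩ <;> omega

theorem card_evenClass (hL : Even L) : #(evenClass L) = L ^ 2 / 2 := by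
  have hEO : #(evenClass L) = #(oddClass L) :=
    card_equiv ((Equiv.refl _).prodCongr (Equiv.addRight 1)) fun v => by
      simp only [evenClass, oddClass, mem_filter, mem_univ, true_and]
      exact iff_not_comm.1 (isEvenVertex_add_snd_one hL v)
  have hsum : #(evenClass L) + #(oddClass L) = L ^ 2 := by
    rw [evenClass, oddClass, card_filter_add_card_filter_not, card_univ, Fintype.card_prod,
      ZMod.card, sq]
  omega

theorem gap_eq (hL : Even L) (J : Finset (ZMod L × ZMod L)) :
    gap L J = #(evenClass L) - #J := by
  rw [gap, card_evenClass hL]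

end Coordinates

section Clearing

variable {L : ℕ} [NeZero L]

/-- The even sites of column `0`, then those of column `1`, are removed one at a time; `t` of
them are gone. -/
def clearing (L t x y : ℕ) : Prop :=
  (x + y) % 2 = 0 ∧ ¬(x = 0 ∧ y < 2 * t) ∧ ¬(x = 1 ∧ y + L < 2 * t)

theorem coordSet_clearing_zero : coordSet L (clearing L 0) = evenClass L := by
  ext v
  simp [clearing, evenClass, isEvenVertex, Nat.even_iff]

theorem indep_clearing (hL : Even L) (t : ℕ) : Indep L (coordSet L (clearing L t)) :=
  indep_coordSet fun x _ y _ x' _ y' _ => by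
    have := Nat.even_iff.1 hL
    unfold clearing GridAdj CycAdj
    omega

theorem clearing_succ (hL : Even L) {t : ℕ} (ht : t < L) :
    ∃ v ∈ coordSet L (clearing L t),
      coordSet L (clearing L (t + 1)) = (coordSet L (clearing L t)).erase v := by
  have := Nat.even_iff.1 hL
  by_cases h : 2 * t < L
  · exact exists_coordSet_eq_erase (a := 0) (b := 2 * t) (by omega) h
      (by unfold clearing; omega) fun x _ y _ => by unfold clearing; omega
  · exact exists_coordSet_eq_erase (a := 1) (b := 2 * t + 1 - L) (by omega) (by omega)
      (by unfold clearing; omega) fun x _ y _ => by unfold clearing; omega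

theorem card_clearing (hL : Even L) {t : ℕ} (ht : t ≤ L) :
    #(coordSet L (clearing L t)) + t = #(evenClass L) := by
  induction t with
  | zero => simp [coordSet_clearing_zero]
  | succ t ih =>
    obtain ⟨v, hv, hstep⟩ := clearing_succ hL ht
    rw [hstep, card_erase_of_mem hv, ← ih (by omega)]
    have := card_pos.2 ⟨v, hv⟩
    omega

theorem reflTransGen_clearing (hL : Even L) :
    ReflTransGen (FlipStep L (L + 1)) (evenClass L) (coordSet L (clearing L L)) := by
  rw [← coordSet_clearing_zero]
  refine reflTransGen_of_forall_succ (fun t => coordSet L (clearing L t)) (Nat.zero_le L)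
    fun t _ ht => .single ?_
  obtain ⟨v, hv, hstep⟩ := clearing_succ hL ht
  refine ⟨hstep ▸ card_symmDiff_erase hv, indep_clearing hL _, ?_⟩
  have := card_clearing hL (t := t + 1) ht
  rw [gap_eq hL]
  omega

end Clearing

section Sweep

variable {L : ℕ} [NeZero L] {k s : ℕ}

/-- With the odd sites of columns `1, …, k-1` and the even sites of columns `k+1, …` occupied,
column `k` is filled row by row: for `y = (k+1) % 2, (k+1) % 2 + 2, …` the even site `(k+1, y)` is
removed, then the odd site `(k, y)` added; `s` counts these flips. -/
def sweep (k s x y : ℕ) : Prop :=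
  ((x + y) % 2 = 1 ∧ (1 ≤ x ∧ x < k ∨ x = k ∧ y + 1 < s + (k + 1) % 2)) ∨
    ((x + y) % 2 = 0 ∧ (x = k + 1 ∧ s + (k + 1) % 2 ≤ y ∨ k + 2 ≤ x))

theorem coordSet_sweep_one_zero : coordSet L (sweep 1 0) = coordSet L (clearing L L) :=
  coordSet_congr fun x _ y _ => by unfold sweep clearing; omega

theorem coordSet_sweep_succ_zero (hL : Even L) (hk : 1 ≤ k) :
    coordSet L (sweep (k + 1) 0) = coordSet L (sweep k L) :=
  coordSet_congr fun x _ y _ => by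
    have := Nat.even_iff.1 hL
    unfold sweep
    omega

theorem indep_sweep (hL : Even L) (hk : 1 ≤ k) (s : ℕ) : Indep L (coordSet L (sweep k s)) :=
  indep_coordSet fun x _ y _ x' _ y' _ => by
    have := Nat.even_iff.1 hL
    unfold sweep GridAdj CycAdj
    omega

theorem sweep_succ_of_even (hL : Even L) (hk : k + 2 ≤ L) (hs : s < L) (hs2 : s % 2 = 0) :
    ∃ v ∈ coordSet L (sweep k s),
      coordSet L (sweep k (s + 1)) = (coordSet L (sweep k s)).erase v := by
  have := Nat.even_iff.1 hL
  exact exists_coordSet_eq_erase (a := k + 1) (b := s + (k + 1) % 2) (by omega) (by omega)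
    (by unfold sweep; omega) fun x _ y _ => by unfold sweep; omega

theorem sweep_succ_of_odd (hk : k + 2 ≤ L) (hs : s < L) (hs2 : s % 2 = 1) :
    ∃ v ∉ coordSet L (sweep k s),
      coordSet L (sweep k (s + 1)) = insert v (coordSet L (sweep k s)) :=
  exists_coordSet_eq_insert (a := k) (b := s - 1 + (k + 1) % 2) (by omega) (by omega)
    (by unfold sweep; omega) fun x _ y _ => by unfold sweep; omega

theorem card_sweep_of_card_zero (hL : Even L) (hk : k + 2 ≤ L)
    (h₀ : #(coordSet L (sweep k 0)) + L = #(evenClass L)) {s : ℕ} (hs : s ≤ L) :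
    #(coordSet L (sweep k s)) + L + s % 2 = #(evenClass L) := by
  induction s with
  | zero => simpa using h₀
  | succ s ih =>
    have ih := ih (by omega)
    rcases Nat.mod_two_eq_zero_or_one s with hs2 | hs2
    · obtain ⟨v, hv, hstep⟩ := sweep_succ_of_even hL hk hs hs2
      rw [hstep, card_erase_of_mem hv]
      have := card_pos.2 ⟨v, hv⟩
      omega
    · obtain ⟨v, hv, hstep⟩ := sweep_succ_of_odd hk hs hs2
      rw [hstep, card_insert_of_notMem hv]
      omega

theorem card_sweep (hL : Even L) (hk : 1 ≤ k) (hk' : k + 2 ≤ L) (hs : s ≤ L) :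
    #(coordSet L (sweep k s)) + L + s % 2 = #(evenClass L) := by
  refine card_sweep_of_card_zero hL hk' ?_ hs
  induction k, hk using Nat.le_induction with
  | base => rw [coordSet_sweep_one_zero, ← card_clearing hL le_rfl]
  | succ k hk ih =>
    have := card_sweep_of_card_zero hL (by omega) (ih (by omega)) le_rfl
    rw [coordSet_sweep_succ_zero hL hk]
    have := Nat.even_iff.1 hL
    omega

theorem reflTransGen_sweep_column (hL : Even L) (hk : 1 ≤ k) (hk' : k + 2 ≤ L) {s s' : ℕ}
    (hss' : s ≤ s') (hs' : s' ≤ L) :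
    ReflTransGen (FlipStep L (L + 1)) (coordSet L (sweep k s)) (coordSet L (sweep k s')) := by
  refine reflTransGen_of_forall_succ (fun s => coordSet L (sweep k s)) hss'
    fun s _ hs => .single ⟨?_, indep_sweep hL hk _, ?_⟩
  · rcases Nat.mod_two_eq_zero_or_one s with hs2 | hs2
    · obtain ⟨v, hv, hstep⟩ := sweep_succ_of_even hL hk' (by omega) hs2
      exact hstep ▸ card_symmDiff_erase hv
    · obtain ⟨v, hv, hstep⟩ := sweep_succ_of_odd hk' (by omega) hs2
      exact hstep ▸ card_symmDiff_insert hv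
  · have := card_sweep hL hk hk' (s := s + 1) (by omega)
    rw [gap_eq hL]
    omega

theorem reflTransGen_sweep (hL : Even L) (hk : 1 ≤ k) (hk' : k + 2 ≤ L) (hs : s ≤ L) :
    ReflTransGen (FlipStep L (L + 1)) (coordSet L (sweep k s))
      (coordSet L (sweep (L - 2) L)) := by
  refine (reflTransGen_sweep_column hL hk hk' hs le_rfl).trans ?_
  refine reflTransGen_of_forall_succ (fun k => coordSet L (sweep k L)) (by omega)
    fun i hi hiL => ?_
  rw [← coordSet_sweep_succ_zero hL (by omega)]
  exact reflTransGen_sweep_column hL (by omega) (by omega) (Nat.zero_le _) le_rfl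

end Sweep

section Filling

variable {L : ℕ} [NeZero L]

/-- The odd sites of column `L-1`, then those of column `0`, are added one at a time; `t` of them
are in. -/
def filling (L t x y : ℕ) : Prop :=
  (x + y) % 2 = 1 ∧ (1 ≤ x ∧ x + 2 ≤ L ∨ x + 1 = L ∧ y < 2 * t ∨ x = 0 ∧ y + L < 2 * t)

theorem coordSet_filling_zero (hL : Even L) (hL' : 3 ≤ L) :
    coordSet L (filling L 0) = coordSet L (sweep (L - 2) L) :=
  coordSet_congr fun x _ y _ => by
    have := Nat.even_iff.1 hL
    unfold filling sweep
    omega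

theorem coordSet_filling_last : coordSet L (filling L L) = oddClass L := by
  ext v
  have := v.1.val_lt
  have := v.2.val_lt
  simp only [mem_coordSet, filling, oddClass, isEvenVertex, Nat.even_iff, mem_filter, mem_univ,
    true_and]
  omega

theorem indep_filling (hL : Even L) (t : ℕ) : Indep L (coordSet L (filling L t)) :=
  indep_coordSet fun x _ y _ x' _ y' _ => by
    have := Nat.even_iff.1 hL
    unfold filling GridAdj CycAdj
    omega

theorem filling_succ (hL : Even L) {t : ℕ} (ht : t < L) :
    ∃ v ∉ coordSet L (filling L t),
      coordSet L (filling L (t + 1)) = insert v (coordSet L (filling L t)) := by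
  have := Nat.even_iff.1 hL
  by_cases h : 2 * t < L
  · exact exists_coordSet_eq_insert (a := L - 1) (b := 2 * t) (by omega) h
      (by unfold filling; omega) fun x _ y _ => by unfold filling; omega
  · exact exists_coordSet_eq_insert (a := 0) (b := 2 * t + 1 - L) (by omega) (by omega)
      (by unfold filling; omega) fun x _ y _ => by unfold filling; omega

theorem card_filling (hL : Even L) (hL' : 3 ≤ L) {t : ℕ} (ht : t ≤ L) :
    #(coordSet L (filling L t)) + L = #(evenClass L) + t := by
  induction t with
  | zero =>
    have := card_sweep hL (k := L - 2) (s := L) (by omega) (by omega) le_rfl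
    rw [coordSet_filling_zero hL hL']
    have := Nat.even_iff.1 hL
    omega
  | succ t ih =>
    obtain ⟨v, hv, hstep⟩ := filling_succ hL ht
    rw [hstep, card_insert_of_notMem hv]
    have := ih (by omega)
    omega

theorem reflTransGen_filling (hL : Even L) (hL' : 3 ≤ L) :
    ReflTransGen (FlipStep L (L + 1)) (coordSet L (filling L 0)) (oddClass L) := by
  rw [← coordSet_filling_last]
  refine reflTransGen_of_forall_succ (fun t => coordSet L (filling L t)) (Nat.zero_le L)
    fun t _ ht => .single ?_
  obtain ⟨v, hv, hstep⟩ := filling_succ hL ht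
  refine ⟨hstep ▸ card_symmDiff_insert hv, indep_filling hL _, ?_⟩
  have := card_filling hL hL' (t := t + 1) ht
  rw [gap_eq hL]
  omega

end Filling

/-- There exists a flip path `ω*` from `E` to `O` through the
independent sets of the `L×L` toric grid (`L ≥ 4` even) along which the
efficiency gap `Δ` never exceeds `L + 1`, and attains the value `L + 1`
(the path builds a column-cluster, creates a stripe, and expands it column by
column); hence `φ(E,O) ≤ L + 1`. -/
theorem stmt_15 (L : ℕ) [NeZero L] (hL : 4 ≤ L) (hLeven : Even L) :
    (∃ ω : List (Finset (ZMod L × ZMod L)),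
      IsFlipPath L ω (evenClass L) (oddClass L) ∧
      (∀ J ∈ ω, gap L J ≤ L + 1) ∧
      (∃ J ∈ ω, gap L J = L + 1)) ∧
    commHeight L (evenClass L) (oddClass L) ≤ L + 1 := by
  have hgapX : gap L (coordSet L (sweep 1 1)) = L + 1 := by
    have := card_sweep hLeven le_rfl (by omega) (s := 1) (by omega)
    rw [gap_eq hLeven]
    omega
  have hEX : ReflTransGen (FlipStep L (L + 1)) (evenClass L) (coordSet L (sweep 1 1)) :=
    (reflTransGen_clearing hLeven).trans <| coordSet_sweep_one_zero (L := L) ▸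
      reflTransGen_sweep_column hLeven le_rfl (by omega) (Nat.zero_le 1) (by omega)
  have hXO : ReflTransGen (FlipStep L (L + 1)) (coordSet L (sweep 1 1)) (oddClass L) :=
    (reflTransGen_sweep hLeven le_rfl (by omega) (by omega)).trans <|
      coordSet_filling_zero hLeven (by omega) ▸ reflTransGen_filling hLeven (by omega)
  have hE : Indep L (evenClass L) := coordSet_clearing_zero (L := L) ▸ indep_clearing hLeven 0
  obtain ⟨ω, hω, hgap, hXω⟩ :=
    exists_isFlipPath_through hE (by simp [gap_eq hLeven]) hEX hXO
  exact ⟨⟨ω, hω, hgap, _, hXω, hgapX⟩, Nat.sInf_le ⟨ω, hω, hgap⟩⟩
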